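/- arXiv:1303.2591 — 5 statements merged into one kernel-verified Lean document; each statement's English description precedes it below -/
import Mathlib

section
/- The separative modification of a product of partial orders equals the product of the separative modifications: sm(∏_{i∈I} P_i) = ∏_{i∈I} sm(P_i). -/
/-- The ordering of the separative modification: `p ≤* q` iff every `r ≤ p` has a
refinement `s ≤ r` with `s ≤ q`. -/
def smle {P : Type*} [PartialOrder P] (p q : P) : Prop :=
  ∀ r ≤ p, ∃ s ≤ r, s ≤ q

/-- The separative modification of a product of partial orders is the product of the
separative modifications: the `≤*` relation of the coordinatewise product order is
the coordinatewise `≤*` relation. -/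
theorem sm_of_product_eq_product_of_sm {I : Type*} (P : I → Type*)
    [∀ i, PartialOrder (P i)] (p q : ∀ i, P i) :
    smle p q ↔ ∀ i, smle (p i) (q i) := by
  classical
  constructor
  · intro h i r hr
    obtain ⟨s, hs1, hs2⟩ := h (Function.update p i r) (by
      intro j
      by_cases hj : j = i
      · subst hj; simpa using hr
      · simp [Function.update_of_ne hj])
    refine ⟨s i, ?_, hs2 i⟩
    simpa using hs1 i
  · intro h r hr
    choose s hs1 hs2 using fun i => h i (r i) (hr i)
    exact ⟨s, hs1, hs2⟩
end

section
/- Let P and Q be partial orders and f : P → Q a surjection that is monotone (p₁ ≤ p₂ implies f(p₁) ≤ f(p₂)) and preserves incompatibility (p₁ ⊥ p₂ implies f(p₁) ⊥ f(p₂)). Then for all p₁, p₂ ∈ P: p₁ ≤* p₂ holds in P if and only if f(p₁) ≤* f(p₂) holds in Q, where ≤* denotes the separative modification ordering. -/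
/-- If `f : P → Q` is a monotone surjection between partial orders which preserves
incompatibility, then `p₁ ≤* p₂` in `P` iff `f p₁ ≤* f p₂` in `Q`. -/
theorem smle_iff_smle_of_monotone_surjection {P Q : Type*} [PartialOrder P]
    [PartialOrder Q] (f : P → Q)
    (hmono : ∀ p₁ p₂ : P, p₁ ≤ p₂ → f p₁ ≤ f p₂)
    (hincomp : ∀ p₁ p₂ : P, (¬ ∃ s, s ≤ p₁ ∧ s ≤ p₂) → ¬ ∃ t, t ≤ f p₁ ∧ t ≤ f p₂)
    (hsurj : Function.Surjective f) :
    ∀ p₁ p₂ : P, smle p₁ p₂ ↔ smle (f p₁) (f p₂) := by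
  have hcompat : ∀ p₁ p₂ : P, (∃ t, t ≤ f p₁ ∧ t ≤ f p₂) → ∃ s, s ≤ p₁ ∧ s ≤ p₂ := by
    intro p₁ p₂ h
    by_contra hc
    exact hincomp p₁ p₂ hc h
  intro p₁ p₂
  constructor
  · intro h r hr
    obtain ⟨p, rfl⟩ := hsurj r
    obtain ⟨u, hu1, hu2⟩ := hcompat p p₁ ⟨f p, le_refl _, hr⟩
    obtain ⟨v, hv1, hv2⟩ := h u hu2
    exact ⟨f v, hmono _ _ (hv1.trans hu1), hmono _ _ hv2⟩
  · intro h r hr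
    obtain ⟨s, hs1, hs2⟩ := h (f r) (hmono _ _ hr)
    exact hcompat r p₂ ⟨s, hs1, hs2⟩
end

section
/- Let P and Q be partial orders and f : P → Q a surjection that is monotone and preserves incompatibility. Then the separative quotients sq(P) and sq(Q) are isomorphic, via the map [p] ↦ [f(p)]. -/
theorem smle_refl {P : Type*} [PartialOrder P] (p : P) : smle p p :=
  fun r hr => ⟨r, le_rfl, hr⟩

theorem smle_trans {P : Type*} [PartialOrder P] {p q t : P} (h₁ : smle p q)
    (h₂ : smle q t) : smle p t := by
  intro r hr
  obtain ⟨s, hsr, hsq⟩ := h₁ r hr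
  obtain ⟨u, hus, hut⟩ := h₂ s hsq
  exact ⟨u, le_trans hus hsr, hut⟩

/-- The equivalence `p =* q` (mutual `≤*`), whose quotient carries the separative
quotient `sq(P)`. -/
def smSetoid (P : Type*) [PartialOrder P] : Setoid P where
  r p q := smle p q ∧ smle q p
  iseqv := ⟨fun p => ⟨smle_refl p, smle_refl p⟩, fun h => ⟨h.2, h.1⟩,
    fun h₁ h₂ => ⟨smle_trans h₁.1 h₂.1, smle_trans h₂.2 h₁.2⟩⟩

/-- The ordering `⊴` of the separative quotient `sq(P)`: `[p] ⊴ [q]` iff `p ≤* q`. -/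
def sqle {P : Type*} [PartialOrder P] (x y : Quotient (smSetoid P)) : Prop :=
  ∃ p q : P, x = Quotient.mk (smSetoid P) p ∧ y = Quotient.mk (smSetoid P) q ∧ smle p q

/-- If `f : P → Q` is a monotone surjection between partial orders which preserves
incompatibility, then the separative quotients `sq(P)` and `sq(Q)` are isomorphic,
via the map `[p] ↦ [f p]`. -/
theorem sq_iso_of_monotone_surjection {P Q : Type*} [PartialOrder P] [PartialOrder Q]
    (f : P → Q)
    (hmono : ∀ p₁ p₂ : P, p₁ ≤ p₂ → f p₁ ≤ f p₂)
    (hincomp : ∀ p₁ p₂ : P, (¬ ∃ s, s ≤ p₁ ∧ s ≤ p₂) → ¬ ∃ t, t ≤ f p₁ ∧ t ≤ f p₂)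
    (hsurj : Function.Surjective f) :
    ∃ F : Quotient (smSetoid P) ≃ Quotient (smSetoid Q),
      (∀ p : P, F (Quotient.mk (smSetoid P) p) = Quotient.mk (smSetoid Q) (f p)) ∧
      (∀ x y : Quotient (smSetoid P), sqle x y ↔ sqle (F x) (F y)) := by
  -- compatibility transfers both ways
  have hcompat : ∀ p₁ p₂ : P, (∃ s, s ≤ p₁ ∧ s ≤ p₂) ↔ ∃ t, t ≤ f p₁ ∧ t ≤ f p₂ := by
    intro p₁ p₂
    constructor
    · rintro ⟨s, h1, h2⟩; exact ⟨f s, hmono _ _ h1, hmono _ _ h2⟩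
    · intro h; by_contra hc; exact hincomp _ _ hc h
  -- key: smle transfers
  have key : ∀ p q : P, smle p q ↔ smle (f p) (f q) := by
    intro p q
    constructor
    · intro h t ht
      obtain ⟨r, rfl⟩ := hsurj t
      have hrp : ∃ s, s ≤ r ∧ s ≤ p :=
        (hcompat r p).2 ⟨f r, le_rfl, ht⟩
      obtain ⟨s, hsr, hsp⟩ := hrp
      obtain ⟨u, hus, huq⟩ := h s hsp
      exact ⟨f u, hmono _ _ (le_trans hus hsr), hmono _ _ huq⟩
    · intro h r hr
      obtain ⟨t, htr, htq⟩ := h (f r) (hmono _ _ hr)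
      have : ∃ s, s ≤ r ∧ s ≤ q := (hcompat r q).2 ⟨t, htr, htq⟩
      obtain ⟨s, h1, h2⟩ := this
      exact ⟨s, h1, h2⟩
  have hwd : ∀ p₁ p₂ : P, (smSetoid P).r p₁ p₂ →
      Quotient.mk (smSetoid Q) (f p₁) = Quotient.mk (smSetoid Q) (f p₂) := by
    intro p₁ p₂ ⟨h1, h2⟩
    exact Quotient.sound ⟨(key _ _).1 h1, (key _ _).1 h2⟩
  let g : Quotient (smSetoid P) → Quotient (smSetoid Q) :=
    Quotient.lift (fun p => Quotient.mk (smSetoid Q) (f p)) hwd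
  have hbij : Function.Bijective g := by
    constructor
    · intro x y h
      obtain ⟨p, rfl⟩ := Quotient.exists_rep x
      obtain ⟨q, rfl⟩ := Quotient.exists_rep y
      have : (smSetoid Q).r (f p) (f q) := Quotient.exact h
      exact Quotient.sound ⟨(key _ _).2 this.1, (key _ _).2 this.2⟩
    · intro y
      obtain ⟨q, rfl⟩ := Quotient.exists_rep y
      obtain ⟨p, rfl⟩ := hsurj q
      exact ⟨Quotient.mk (smSetoid P) p, rfl⟩
  -- sqle on quotients equals smle on any representatives
  have hsqP : ∀ (p q : P),
      sqle (Quotient.mk (smSetoid P) p) (Quotient.mk (smSetoid P) q) ↔ smle p q := by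
    intro p q
    constructor
    · rintro ⟨a, b, ha, hb, hab⟩
      have h1 : (smSetoid P).r p a := Quotient.exact ha
      have h2 : (smSetoid P).r q b := Quotient.exact hb
      exact smle_trans (smle_trans h1.1 hab) h2.2
    · intro h; exact ⟨p, q, rfl, rfl, h⟩
  have hsqQ : ∀ (p q : Q),
      sqle (Quotient.mk (smSetoid Q) p) (Quotient.mk (smSetoid Q) q) ↔ smle p q := by
    intro p q
    constructor
    · rintro ⟨a, b, ha, hb, hab⟩
      have h1 : (smSetoid Q).r p a := Quotient.exact ha
      have h2 : (smSetoid Q).r q b := Quotient.exact hb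
      exact smle_trans (smle_trans h1.1 hab) h2.2
    · intro h; exact ⟨p, q, rfl, rfl, h⟩
  refine ⟨Equiv.ofBijective g hbij, fun p => rfl, ?_⟩
  intro x y
  obtain ⟨p, rfl⟩ := Quotient.exists_rep x
  obtain ⟨q, rfl⟩ := Quotient.exists_rep y
  show sqle _ _ ↔ sqle (Quotient.mk (smSetoid Q) (f p)) (Quotient.mk (smSetoid Q) (f q))
  exact (hsqP p q).trans ((key p q).trans (hsqQ (f p) (f q)).symm)
end

section
/- Let ρ be an equivalence relation on a countable set X with exactly n classes (1 ≤ n < ω), each infinite. Then the poset of copies ⟨P(X_ρ), ⊆⟩ is isomorphic to the n-th power ⟨[ω]^ω, ⊆⟩^n of the poset of infinite subsets of ω ordered by inclusion, where P(X_ρ) = { A ⊆ X : ⟨A, ρ∩A²⟩ ≅ ⟨X, ρ⟩ }. -/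
/-- Let `s` be an equivalence relation on a countable set `X` with exactly `n`
classes (`1 ≤ n < ω`), all infinite.  The poset `⟨P(X_s), ⊆⟩` of (domains of)
isomorphic copies of `⟨X, s⟩` is isomorphic to the `n`-th power `⟨[ω]^ω, ⊆⟩ⁿ` of the
poset of infinite subsets of `ω` ordered by inclusion. -/
theorem poset_of_copies_iso_power {X : Type*} [Countable X]
    (s : Setoid X) (n : ℕ) (hn : 1 ≤ n)
    (hcard : Nat.card (Quotient s) = n)
    (hinf : ∀ x : X, ({y : X | s.r x y}).Infinite) :
    Nonempty
      (({A : Set X // ∃ f : X → X, Function.Injective f ∧ Set.range f = A ∧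
          ∀ x y : X, s.r x y ↔ s.r (f x) (f y)}) ≃o
        (Fin n → {B : Set ℕ // B.Infinite})) := by
  classical
  haveI hfin : Finite (Quotient s) := Nat.finite_of_card_ne_zero (by omega)
  have q : Quotient s ≃ Fin n := by
    have e := Finite.equivFin (Quotient s)
    rwa [hcard] at e
  -- the classes
  set C : Fin n → Set X := fun i => {x : X | Quotient.mk s x = q.symm i} with hC
  have memC : ∀ (x : X) (i : Fin n), x ∈ C i ↔ Quotient.mk s x = q.symm i := by
    intro x i; rfl
  have self_mem : ∀ x : X, x ∈ C (q (Quotient.mk s x)) := by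
    intro x; rw [memC]; simp
  have Cinf : ∀ i, (C i).Infinite := by
    intro i
    obtain ⟨x₀, hx₀⟩ := Quotient.exists_rep (q.symm i)
    have : {y : X | s.r x₀ y} ⊆ C i := by
      intro y hy
      rw [memC, ← hx₀]
      exact Quotient.sound (Setoid.symm hy)
    exact (hinf x₀).mono this
  have Cdisj : ∀ i j x, x ∈ C i → x ∈ C j → i = j := by
    intro i j x hi hj
    rw [memC] at hi hj
    have := hi.symm.trans hj
    exact q.symm.injective this
  -- characterization of copies
  have char : ∀ A : Set X,
      (∃ f : X → X, Function.Injective f ∧ Set.range f = A ∧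
        ∀ x y : X, s.r x y ↔ s.r (f x) (f y)) ↔ ∀ i, (A ∩ C i).Infinite := by
    intro A
    constructor
    · rintro ⟨f, hinj, hrange, hpres⟩ i
      -- induced map on quotient
      have hwd : ∀ x y : X, s.r x y → Quotient.mk s (f x) = Quotient.mk s (f y) := by
        intro x y h
        exact Quotient.sound ((hpres x y).1 h)
      set φ : Quotient s → Quotient s :=
        Quotient.lift (fun x => Quotient.mk s (f x)) (fun x y h => hwd x y h) with hφ
      have φinj : Function.Injective φ := by
        intro a b hab
        obtain ⟨x, rfl⟩ := Quotient.exists_rep a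
        obtain ⟨y, rfl⟩ := Quotient.exists_rep b
        exact Quotient.sound ((hpres x y).2 (Quotient.exact hab))
      have φsurj : Function.Surjective φ := Finite.surjective_of_injective φinj
      obtain ⟨c, hc⟩ := φsurj (q.symm i)
      obtain ⟨x₁, rfl⟩ := Quotient.exists_rep c
      have him : f '' {y : X | s.r x₁ y} ⊆ A ∩ C i := by
        rintro _ ⟨y, hy, rfl⟩
        refine ⟨hrange ▸ Set.mem_range_self y, ?_⟩
        rw [memC, ← hc]
        exact Quotient.sound (Setoid.symm ((hpres x₁ y).1 hy))
      exact ((hinf x₁).image (hinj.injOn)).mono him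
    · intro hA
      -- choose bijections between classes and A ∩ classes
      have hx : ∀ i : Fin n, Nonempty (↥(C i) ≃ ↥(A ∩ C i)) := by
        intro i
        haveI : Infinite ↥(C i) := Set.infinite_coe_iff.2 (Cinf i)
        haveI : Infinite ↥(A ∩ C i) := Set.infinite_coe_iff.2 (hA i)
        infer_instance
      have h : ∀ i : Fin n, ↥(C i) ≃ ↥(A ∩ C i) := fun i => (hx i).some
      set idx : X → Fin n := fun x => q (Quotient.mk s x) with hidx
      set f : X → X := fun x => ((h (idx x)) ⟨x, self_mem x⟩ : X) with hf
      have hfval : ∀ (x : X) (i : Fin n) (hxi : x ∈ C i), f x = ((h i) ⟨x, hxi⟩ : X) := by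
        intro x i hxi
        have : idx x = i := by
          rw [memC] at hxi
          simp [hidx, hxi]
        subst this
        rfl
      have hfmem : ∀ x : X, f x ∈ A ∩ C (idx x) := fun x =>
        ((h (idx x)) ⟨x, self_mem x⟩).2
      have hidxf : ∀ x : X, idx (f x) = idx x := fun x =>
        Cdisj _ _ _ (self_mem (f x)) (hfmem x).2
      refine ⟨f, ?_, ?_, ?_⟩
      · intro x y hxy
        have hi : idx x = idx y := by
          have := Cdisj (idx x) (idx y) (f x) (hfmem x).2 (hxy ▸ (hfmem y).2)
          exact this
        have hx' : x ∈ C (idx y) := hi ▸ self_mem x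
        have h1 : f x = ((h (idx y)) ⟨x, hx'⟩ : X) := hfval x (idx y) hx'
        have h2 : f y = ((h (idx y)) ⟨y, self_mem y⟩ : X) := rfl
        have := (h (idx y)).injective (Subtype.ext ((h1 ▸ h2 ▸ hxy : _)))
        exact congrArg Subtype.val this
      · apply Set.eq_of_subset_of_subset
        · rintro _ ⟨x, rfl⟩; exact (hfmem x).1
        · intro a ha
          set i := idx a with hi
          have hai : a ∈ C i := self_mem a
          set x : ↥(C i) := (h i).symm ⟨a, ha, hai⟩ with hxdef
          have hxi : (x : X) ∈ C i := x.2
          refine ⟨(x : X), ?_⟩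
          have h1 : f (x : X) = ((h i) ⟨(x : X), hxi⟩ : X) := hfval _ i hxi
          have h2 : (⟨(x : X), hxi⟩ : ↥(C i)) = x := Subtype.ext rfl
          rw [h1, h2, hxdef, Equiv.apply_symm_apply]
      · intro x y
        have key : ∀ z : X, Quotient.mk s (f z) = Quotient.mk s z := by
          intro z
          have h1 := (memC (f z) (idx z)).1 (hfmem z).2
          have h2 : Quotient.mk s z = q.symm (idx z) := by simp [hidx]
          rw [h1, h2]
        constructor
        · intro hxy
          exact Quotient.exact (by rw [key x, key y]; exact Quotient.sound hxy)
        · intro hxy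
          exact Quotient.exact (by rw [← key x, ← key y]; exact Quotient.sound hxy)
  -- bijections classes ≃ ℕ
  have hgne : ∀ i : Fin n, Nonempty (↥(C i) ≃ ℕ) := by
    intro i
    haveI : Infinite ↥(C i) := Set.infinite_coe_iff.2 (Cinf i)
    infer_instance
  have g : ∀ i : Fin n, ↥(C i) ≃ ℕ := fun i => (hgne i).some
  -- forward map
  set F : Set X → Fin n → Set ℕ := fun A i => (g i) '' {x : ↥(C i) | (x : X) ∈ A} with hF
  set G : (Fin n → Set ℕ) → Set X := fun B => ⋃ i, Subtype.val '' ((g i) ⁻¹' (B i)) with hG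
  have hFinf : ∀ (A : Set X), (∀ i, (A ∩ C i).Infinite) → ∀ i, (F A i).Infinite := by
    intro A hA i
    have himg : Subtype.val '' {x : ↥(C i) | (x : X) ∈ A} = A ∩ C i := by
      apply Set.eq_of_subset_of_subset
      · rintro _ ⟨y, hy, rfl⟩; exact ⟨hy, y.2⟩
      · rintro x ⟨hxA, hxC⟩; exact ⟨⟨x, hxC⟩, hxA, rfl⟩
    have hS : {x : ↥(C i) | (x : X) ∈ A}.Infinite :=
      Set.Infinite.of_image Subtype.val (by rw [himg]; exact hA i)
    exact hS.image ((g i).injective.injOn)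
  have hGC : ∀ (B : Fin n → Set ℕ) (j : Fin n),
      G B ∩ C j = Subtype.val '' ((g j) ⁻¹' (B j)) := by
    intro B j
    apply Set.eq_of_subset_of_subset
    · rintro x ⟨hx, hxj⟩
      rw [hG] at hx
      simp only [Set.mem_iUnion] at hx
      obtain ⟨i, y, hy, rfl⟩ := hx
      have : i = j := Cdisj i j _ y.2 hxj
      subst this
      exact ⟨y, hy, rfl⟩
    · rintro _ ⟨y, hy, rfl⟩
      exact ⟨Set.mem_iUnion.2 ⟨j, y, hy, rfl⟩, y.2⟩
  have hFG : ∀ B : Fin n → Set ℕ, ∀ j, F (G B) j = B j := by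
    intro B j
    show (g j) '' {x : ↥(C j) | (x : X) ∈ G B} = B j
    have : {x : ↥(C j) | (x : X) ∈ G B} = (g j) ⁻¹' (B j) := by
      apply Set.eq_of_subset_of_subset
      · intro x hx
        have hx' : (x : X) ∈ G B ∩ C j := ⟨hx, x.2⟩
        rw [hGC] at hx'
        obtain ⟨y, hy, hyx⟩ := hx'
        have : y = x := Subtype.ext hyx
        subst this
        exact hy
      · intro x hx
        have : (x : X) ∈ G B ∩ C j := by
          rw [hGC]; exact ⟨x, hx, rfl⟩
        exact this.1
    rw [this, Set.image_preimage_eq _ (g j).surjective]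
  have hAcover : ∀ (A : Set X), A = ⋃ i, (A ∩ C i) := by
    intro A
    apply Set.eq_of_subset_of_subset
    · intro a ha
      exact Set.mem_iUnion.2 ⟨q (Quotient.mk s a), ha, self_mem a⟩
    · intro a ha
      obtain ⟨i, hi⟩ := Set.mem_iUnion.1 ha
      exact hi.1
  have hGF : ∀ A : Set X, G (F A) = A := by
    intro A
    rw [hG]
    have : ∀ i, Subtype.val '' ((g i) ⁻¹' (F A i)) = A ∩ C i := by
      intro i
      rw [hF]
      rw [Set.preimage_image_eq _ (g i).injective]
      apply Set.eq_of_subset_of_subset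
      · rintro _ ⟨y, hy, rfl⟩; exact ⟨hy, y.2⟩
      · rintro x ⟨hxA, hxC⟩; exact ⟨⟨x, hxC⟩, hxA, rfl⟩
    calc (⋃ i, Subtype.val '' ((g i) ⁻¹' (F A i))) = ⋃ i, (A ∩ C i) := by
          exact Set.iUnion_congr this
      _ = A := (hAcover A).symm
  refine ⟨⟨⟨fun A => fun i => ⟨F A.1 i, hFinf A.1 ((char A.1).1 A.2) i⟩,
    fun B => ⟨G (fun i => (B i).1), (char _).2 (fun i => by
      rw [hGC]
      exact ((B i).2.preimage (fun b _ => ⟨(g i).symm b, by simp⟩)).image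
        (Subtype.val_injective.injOn))⟩,
    ?_, ?_⟩, ?_⟩⟩
  · intro A
    apply Subtype.ext
    exact hGF A.1
  · intro B
    funext i
    apply Subtype.ext
    exact hFG (fun i => (B i).1) i
  · intro A A'
    simp only [Equiv.coe_fn_mk]
    constructor
    · intro hle
      intro a ha
      rw [hAcover A.1] at ha
      obtain ⟨i, hi⟩ := Set.mem_iUnion.1 ha
      have h1 : F A.1 i ⊆ F A'.1 i := hle i
      have : (g i) ⟨a, hi.2⟩ ∈ F A.1 i := ⟨⟨a, hi.2⟩, hi.1, rfl⟩
      have h2 := h1 this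
      obtain ⟨y, hy, hyeq⟩ := h2
      have : y = ⟨a, hi.2⟩ := (g i).injective hyeq
      subst this
      exact hy
    · intro hle i
      intro b hb
      obtain ⟨y, hy, rfl⟩ := hb
      exact ⟨y, hle hy, rfl⟩
end

section
/- Let (X_i)_{i∈ω} be a partition of a countable set X into finite nonempty pieces of unbounded size, and let I = { S ⊆ X : ∃n ∀i |S ∩ X_i| ≤ n }. Then the quotient partial order (P(X)/I)⁺ (equivalently, the preorder ⟨P(X)\I, ⊆_I⟩ where A ⊆_I B iff A\B ∈ I) is σ-closed: every decreasing ω-sequence of I-positive sets A_{n+1} ⊆_I A_n has an I-positive lower bound A with A ⊆_I A_n for all n. -/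
/-- Let `(X_i)_{i∈ω}` be a partition of a countable set `X` into finite nonempty
pieces of unbounded size and let `I = { S ⊆ X : ∃n ∀i, |S ∩ X_i| ≤ n }`.  The
preorder `⟨P(X) \ I, ⊆_I⟩` (where `A ⊆_I B` iff `A \ B ∈ I`), i.e. the quotient
`(P(X)/I)⁺`, is σ-closed: every `⊆_I`-decreasing `ω`-sequence of `I`-positive sets
has an `I`-positive `⊆_I`-lower bound. -/
theorem quotient_by_bounded_ideal_sigma_closed {X : Type*} [Countable X]
    (part : X → ℕ)
    (hfin : ∀ i : ℕ, (part ⁻¹' {i}).Finite)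
    (hne : ∀ i : ℕ, (part ⁻¹' {i}).Nonempty)
    (hunb : ∀ n : ℕ, ∃ i : ℕ, n < (part ⁻¹' {i}).ncard)
    (I : Set (Set X))
    (hI : I = {S : Set X | ∃ n : ℕ, ∀ i : ℕ, (S ∩ part ⁻¹' {i}).ncard ≤ n})
    (A : ℕ → Set X)
    (hpos : ∀ n, A n ∉ I)
    (hdec : ∀ m n : ℕ, m ≤ n → A n \ A m ∈ I) :
    ∃ B : Set X, B ∉ I ∧ ∀ n, B \ A n ∈ I := by
  subst hI
  have hmem : ∀ S : Set X,
      S ∈ {S : Set X | ∃ n : ℕ, ∀ i : ℕ, (S ∩ part ⁻¹' {i}).ncard ≤ n} ↔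
      ∃ n : ℕ, ∀ i : ℕ, (S ∩ part ⁻¹' {i}).ncard ≤ n := fun S => Iff.rfl
  have hfin' : ∀ (S : Set X) (i : ℕ), (S ∩ part ⁻¹' {i}).Finite :=
    fun S i => (hfin i).subset Set.inter_subset_right
  -- closure under subsets
  have key_sub : ∀ {S T : Set X}, S ⊆ T →
      (∃ n, ∀ i, (T ∩ part ⁻¹' {i}).ncard ≤ n) →
      (∃ n, ∀ i, (S ∩ part ⁻¹' {i}).ncard ≤ n) := by
    rintro S T hST ⟨n, hn⟩
    exact ⟨n, fun i => le_trans
      (Set.ncard_le_ncard (Set.inter_subset_inter_left _ hST) (hfin' T i)) (hn i)⟩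
  -- closure under finite unions
  have key_bunion : ∀ (s : Finset ℕ) (f : ℕ → Set X),
      (∀ m ∈ s, ∃ n, ∀ i, (f m ∩ part ⁻¹' {i}).ncard ≤ n) →
      ∃ n, ∀ i, ((⋃ m ∈ s, f m) ∩ part ⁻¹' {i}).ncard ≤ n := by
    intro s f
    induction s using Finset.induction_on with
    | empty => intro _; exact ⟨0, fun i => by simp⟩
    | @insert a s ha ih =>
      intro h
      obtain ⟨n, hn⟩ := h a (Finset.mem_insert_self a s)
      obtain ⟨n', hn'⟩ := ih (fun m hm => h m (Finset.mem_insert_of_mem hm))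
      refine ⟨n + n', fun i => ?_⟩
      have : (⋃ m ∈ insert a s, f m) ∩ part ⁻¹' {i} ⊆
          (f a ∩ part ⁻¹' {i}) ∪ ((⋃ m ∈ s, f m) ∩ part ⁻¹' {i}) := by
        intro x hx
        obtain ⟨hx1, hx2⟩ := hx
        simp only [Finset.mem_insert, Set.mem_iUnion] at hx1
        obtain ⟨m, hm, hxm⟩ := hx1
        rcases hm with rfl | hm
        · exact Or.inl ⟨hxm, hx2⟩
        · exact Or.inr ⟨Set.mem_iUnion₂.2 ⟨m, hm, hxm⟩, hx2⟩
      calc ((⋃ m ∈ insert a s, f m) ∩ part ⁻¹' {i}).ncard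
          ≤ ((f a ∩ part ⁻¹' {i}) ∪ ((⋃ m ∈ s, f m) ∩ part ⁻¹' {i})).ncard :=
            Set.ncard_le_ncard this ((hfin' _ i).union (hfin' _ i))
        _ ≤ (f a ∩ part ⁻¹' {i}).ncard + ((⋃ m ∈ s, f m) ∩ part ⁻¹' {i}).ncard :=
            Set.ncard_union_le _ _
        _ ≤ n + n' := Nat.add_le_add (hn i) (hn' i)
  -- the sets C n = ⋂_{m ≤ n} A m
  set C : ℕ → Set X := fun n => ⋂ m ∈ Finset.range (n+1), A m with hC
  have hCA : ∀ m n : ℕ, m ≤ n → C n ⊆ A m := by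
    intro m n hmn x hx
    exact Set.mem_iInter₂.1 hx m (Finset.mem_range.2 (Nat.lt_succ_of_le hmn))
  have hCpos : ∀ n, ¬ ∃ k, ∀ i, (C n ∩ part ⁻¹' {i}).ncard ≤ k := by
    intro n hCn
    apply hpos n
    have hU : ∃ k, ∀ i,
        ((⋃ m ∈ Finset.range (n+1), (A n \ A m)) ∩ part ⁻¹' {i}).ncard ≤ k :=
      key_bunion _ _ (fun m hm => hdec m n (Nat.lt_succ_iff.1 (Finset.mem_range.1 hm)))
    have hsplit : A n ⊆ C n ∪ ⋃ m ∈ Finset.range (n+1), (A n \ A m) := by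
      intro x hx
      by_cases hxu : x ∈ ⋃ m ∈ Finset.range (n+1), (A n \ A m)
      · exact Or.inr hxu
      · refine Or.inl (Set.mem_iInter₂.2 fun m hm => ?_)
        by_contra hxm
        exact hxu (Set.mem_iUnion₂.2 ⟨m, hm, hx, hxm⟩)
    obtain ⟨k1, hk1⟩ := hCn
    obtain ⟨k2, hk2⟩ := hU
    refine key_sub hsplit ?_
    refine ⟨k1 + k2, fun i => ?_⟩
    have hss : (C n ∪ ⋃ m ∈ Finset.range (n+1), (A n \ A m)) ∩ part ⁻¹' {i} ⊆
        (C n ∩ part ⁻¹' {i}) ∪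
          ((⋃ m ∈ Finset.range (n+1), (A n \ A m)) ∩ part ⁻¹' {i}) := by
      rintro x ⟨hx1 | hx1, hx2⟩
      · exact Or.inl ⟨hx1, hx2⟩
      · exact Or.inr ⟨hx1, hx2⟩
    calc ((C n ∪ ⋃ m ∈ Finset.range (n+1), (A n \ A m)) ∩ part ⁻¹' {i}).ncard
        ≤ _ := Set.ncard_le_ncard hss ((hfin' _ i).union (hfin' _ i))
      _ ≤ _ := Set.ncard_union_le _ _
      _ ≤ k1 + k2 := Nat.add_le_add (hk1 i) (hk2 i)
  -- choose witnessing pieces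
  have hchoice : ∀ n : ℕ, ∃ i : ℕ, n < (C n ∩ part ⁻¹' {i}).ncard := by
    intro n
    have := hCpos n
    push_neg at this
    obtain ⟨i, hi⟩ := this n
    exact ⟨i, hi⟩
  choose idx hidx using hchoice
  refine ⟨⋃ n, C n ∩ part ⁻¹' {idx n}, ?_, ?_⟩
  · -- positivity of B
    rintro ⟨k, hk⟩
    have h1 : k < ((⋃ n, C n ∩ part ⁻¹' {idx n}) ∩ part ⁻¹' {idx k}).ncard := by
      refine lt_of_lt_of_le (hidx k) (Set.ncard_le_ncard ?_ (hfin' _ _))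
      intro x hx
      exact ⟨Set.mem_iUnion.2 ⟨k, hx⟩, hx.2⟩
    exact absurd (hk (idx k)) (not_le.2 h1)
  · -- lower bound
    intro m
    have hss : (⋃ n, C n ∩ part ⁻¹' {idx n}) \ A m ⊆
        ⋃ n ∈ Finset.range m, (C n ∩ part ⁻¹' {idx n}) := by
      rintro x ⟨hx1, hx2⟩
      obtain ⟨n, hxn⟩ := Set.mem_iUnion.1 hx1
      have hnm : n < m := by
        by_contra h
        exact hx2 (hCA m n (le_of_not_gt h) hxn.1)
      exact Set.mem_iUnion₂.2 ⟨n, Finset.mem_range.2 hnm, hxn⟩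
    refine key_sub hss (key_bunion _ _ fun n _ => ?_)
    refine ⟨(part ⁻¹' {idx n}).ncard, fun i => ?_⟩
    exact Set.ncard_le_ncard (fun x hx => hx.1.2) (hfin (idx n))
end
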